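/- arXiv:1504.02047 — 4 statements merged into one kernel-verified Lean document; each statement's English description precedes it below -/
import Mathlib

section
/- For any nonnegative integers i and j, the sum over m of (-1)^{m+i} (ν+m+1)(m+1)^2 / ((i-m)!(m+1-j)!) equals (ν+i+1)(i+1)^2 δ_{i+1,j} + (i^2 + 2i(ν+i) + ν + 3i + 1) δ_{i,j} + (ν+3i) δ_{i-1,j} + δ_{i-2,j}. -/
open Finset

/-- `1/n!` extended to integers: zero for negative arguments. -/
noncomputable def invFact (n : ℤ) : ℝ :=
  if 0 ≤ n then ((n.toNat).factorial : ℝ)⁻¹ else 0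

lemma A0 (n : ℕ) (h : 1 ≤ n) :
    ∑ k ∈ range (n+1), (-1 : ℝ)^k * (n.choose k) = 0 := by
  have h2 := Int.alternating_sum_range_choose (n := n)
  rw [if_neg (by omega)] at h2
  have h3 : ((∑ m ∈ range (n + 1), (-1:ℤ) ^ m * ↑(n.choose m) : ℤ) : ℝ) = 0 := by
    rw [h2]; norm_num
  rw [← h3]
  push_cast
  ring

lemma reduce (m : ℕ) (f : ℕ → ℝ) :
    ∑ k ∈ range (m+2), (-1:ℝ)^k * ((m+1).choose k) * k * f k
      = -(m+1) * ∑ k ∈ range (m+1), (-1:ℝ)^k * (m.choose k) * f (k+1) := by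
  rw [Finset.sum_range_succ' (fun k => (-1:ℝ)^k * ((m+1).choose k) * k * f k) (m+1)]
  simp only [Nat.cast_zero, mul_zero, zero_mul, add_zero]
  rw [Finset.mul_sum]
  apply Finset.sum_congr rfl
  intro k _
  have hnat := Nat.add_one_mul_choose_eq m k
  have h1 : ((m:ℝ)+1) * (m.choose k) = ((m+1).choose (k+1)) * ((k:ℝ)+1) := by
    exact_mod_cast congrArg (Nat.cast : ℕ → ℝ) hnat
  push_cast
  linear_combination ((-1:ℝ)^k) * f (k+1) * h1

lemma A1 (n : ℕ) (h : 2 ≤ n) :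
    ∑ k ∈ range (n+1), (-1:ℝ)^k * (n.choose k) * k = 0 := by
  obtain ⟨m, rfl⟩ : ∃ m, n = m + 1 := ⟨n-1, by omega⟩
  have hr := reduce m (fun _ => (1:ℝ))
  simp only [mul_one] at hr
  rw [show m+1+1 = m+2 from rfl, hr, A0 m (by omega)]
  ring

lemma A2 (n : ℕ) (h : 3 ≤ n) :
    ∑ k ∈ range (n+1), (-1:ℝ)^k * (n.choose k) * k^2 = 0 := by
  obtain ⟨m, rfl⟩ : ∃ m, n = m + 1 := ⟨n-1, by omega⟩
  have hr := reduce m (fun j : ℕ => (j:ℝ))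
  have e1 : ∀ k ∈ range (m+2), (-1:ℝ)^k * ((m+1).choose k) * (k:ℝ)^2
      = (-1:ℝ)^k * ((m+1).choose k) * k * k := by intro k _; ring
  rw [show m+1+1 = m+2 from rfl, Finset.sum_congr rfl e1, hr]
  have e : ∀ k ∈ range (m+1), (-1:ℝ)^k * (m.choose k) * (((k+1:ℕ)):ℝ)
      = (-1:ℝ)^k * (m.choose k) * k + (-1:ℝ)^k * (m.choose k) := by
    intro k _; push_cast; ring
  rw [Finset.sum_congr rfl e, Finset.sum_add_distrib, A0 m (by omega), A1 m (by omega)]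
  ring

lemma A3 (n : ℕ) (h : 4 ≤ n) :
    ∑ k ∈ range (n+1), (-1:ℝ)^k * (n.choose k) * k^3 = 0 := by
  obtain ⟨m, rfl⟩ : ∃ m, n = m + 1 := ⟨n-1, by omega⟩
  have hr := reduce m (fun j : ℕ => (j:ℝ)^2)
  have e1 : ∀ k ∈ range (m+2), (-1:ℝ)^k * ((m+1).choose k) * (k:ℝ)^3
      = (-1:ℝ)^k * ((m+1).choose k) * k * (k:ℝ)^2 := by intro k _; ring
  rw [show m+1+1 = m+2 from rfl, Finset.sum_congr rfl e1, hr]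
  have e : ∀ k ∈ range (m+1), (-1:ℝ)^k * (m.choose k) * (((k+1:ℕ)):ℝ)^2
      = (-1:ℝ)^k * (m.choose k) * k^2 + 2 * ((-1:ℝ)^k * (m.choose k) * k)
        + (-1:ℝ)^k * (m.choose k) := by
    intro k _; push_cast; ring
  rw [Finset.sum_congr rfl e, Finset.sum_add_distrib, Finset.sum_add_distrib,
    ← Finset.mul_sum, A0 m (by omega), A1 m (by omega), A2 m (by omega)]
  ring

lemma Apoly (n : ℕ) (h : 4 ≤ n) (a b c d : ℝ) :
    ∑ k ∈ range (n+1), (-1:ℝ)^k * (n.choose k) * (a + b*k + c*k^2 + d*k^3) = 0 := by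
  have e : ∀ k ∈ range (n+1), (-1:ℝ)^k * (n.choose k) * (a + b*k + c*k^2 + d*k^3)
      = a * ((-1:ℝ)^k * (n.choose k)) + b * ((-1:ℝ)^k * (n.choose k) * k)
        + c * ((-1:ℝ)^k * (n.choose k) * k^2) + d * ((-1:ℝ)^k * (n.choose k) * k^3) := by
    intro k _; ring
  rw [Finset.sum_congr rfl e, Finset.sum_add_distrib, Finset.sum_add_distrib,
    Finset.sum_add_distrib, ← Finset.mul_sum, ← Finset.mul_sum, ← Finset.mul_sum, ← Finset.mul_sum,
    A0 n (by omega), A1 n (by omega), A2 n (by omega), A3 n (by omega)]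
  ring

lemma ifneg {n : ℤ} (h : n < 0) : invFact n = 0 := if_neg (not_le.mpr h)

lemma ifnat (n : ℕ) : invFact (n : ℤ) = ((n.factorial : ℝ))⁻¹ := by
  simp [invFact]


theorem sum_identity_two (ν : ℝ) (hν : 0 ≤ ν) (i j : ℕ) :
    ∑ m ∈ Finset.range (i + 1),
      (-1 : ℝ) ^ (m + i) * (ν + m + 1) * (m + 1) ^ 2 *
        invFact ((i : ℤ) - m) * invFact ((m : ℤ) + 1 - j)
      = (ν + i + 1) * (i + 1) ^ 2 * (if (i : ℤ) + 1 = j then 1 else 0)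
        + ((i : ℝ) ^ 2 + 2 * i * (ν + i) + ν + 3 * i + 1) * (if (i : ℤ) = j then 1 else 0)
        + (ν + 3 * i) * (if (i : ℤ) - 1 = j then 1 else 0)
        + (if (i : ℤ) - 2 = j then 1 else 0) := by
  set g : ℕ → ℝ := fun k =>
    (-1:ℝ)^(k+i+1) * (ν+k) * (k:ℝ)^2 * invFact ((i:ℤ)+1-k) * invFact ((k:ℤ)-j) with hg
  have hshift : ∑ m ∈ Finset.range (i + 1),
      (-1 : ℝ) ^ (m + i) * (ν + m + 1) * (m + 1) ^ 2 *
        invFact ((i : ℤ) - m) * invFact ((m : ℤ) + 1 - j)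
      = ∑ k ∈ range (i+2), g k := by
    rw [Finset.sum_range_succ' g (i+1)]
    have hg0 : g 0 = 0 := by simp [hg]
    rw [hg0, add_zero]
    refine Finset.sum_congr rfl fun m _ => ?_
    simp only [hg]
    have e1 : (i:ℤ)+1-((m+1:ℕ):ℤ) = (i:ℤ)-m := by push_cast; ring
    have e2 : ((m+1:ℕ):ℤ)-(j:ℤ) = (m:ℤ)+1-j := by push_cast; ring
    rw [e1, e2, show m+1+i+1 = (m+i)+2 from by omega, pow_add]
    push_cast
    ring
  rw [hshift]
  by_cases hj : i+2 ≤ j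
  · rw [Finset.sum_eq_zero (fun k hk => by
      simp only [hg]
      rw [ifneg (show (k:ℤ)-j < 0 from by simp only [Finset.mem_range] at hk; omega)]
      ring)]
    rw [if_neg (show ¬((i:ℤ)+1 = j) from by omega),
      if_neg (show ¬((i:ℤ) = j) from by omega),
      if_neg (show ¬((i:ℤ)-1 = j) from by omega),
      if_neg (show ¬((i:ℤ)-2 = j) from by omega)]
    ring
  · push_neg at hj
    obtain ⟨n, hn⟩ : ∃ n, i+1 = j+n := ⟨i+1-j, by omega⟩
    have hsplit : ∑ k ∈ range (i+2), g k = ∑ t ∈ range (n+1), g (j+t) := by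
      have h1 : ∑ k ∈ Ico 0 j, g k + ∑ k ∈ Ico j (i+2), g k = ∑ k ∈ Ico 0 (i+2), g k :=
        Finset.sum_Ico_consecutive g (Nat.zero_le j) (by omega)
    -- sum over Ico 0 j vanishes
      have h2 : ∑ k ∈ Ico 0 j, g k = 0 := Finset.sum_eq_zero (fun k hk => by
        simp only [hg]
        rw [ifneg (show (k:ℤ)-j < 0 from by
          simp only [Finset.mem_Ico] at hk; omega)]
        ring)
      rw [Finset.range_eq_Ico, ← h1, h2, zero_add, Finset.sum_Ico_eq_sum_range,
        show i+2-j = n+1 from by omega, Finset.range_eq_Ico]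
    rw [hsplit]
    have hterm : ∀ t ∈ range (n+1), g (j+t)
        = ((-1:ℝ)^n * ((n.factorial : ℝ))⁻¹) *
            ((-1:ℝ)^t * (n.choose t : ℕ) * ((ν+(j:ℝ)+t)*((j:ℝ)+t)^2)) := by
      intro t ht
      have ht' : t ≤ n := by simp only [Finset.mem_range] at ht; omega
      simp only [hg]
      have e1 : (i:ℤ)+1-((j+t:ℕ):ℤ) = ((n-t : ℕ):ℤ) := by push_cast [ht']; omega
      have e2 : ((j+t:ℕ):ℤ)-(j:ℤ) = ((t:ℕ):ℤ) := by push_cast; ring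
      rw [e1, e2, ifnat, ifnat, show j+t+i+1 = (n+t)+2*j from by omega, pow_add, pow_mul]
      have hcr : ((n.choose t : ℕ):ℝ) * (t.factorial) * (((n-t).factorial : ℕ):ℝ)
          = ((n.factorial : ℕ):ℝ) := by
        exact_mod_cast congrArg (Nat.cast : ℕ → ℝ) (Nat.choose_mul_factorial_mul_factorial ht')
      have f1 : ((t.factorial:ℝ)) ≠ 0 := by positivity
      have f2 : ((((n-t).factorial : ℕ)):ℝ) ≠ 0 := by positivity
      have f3 : (((n.factorial : ℕ)):ℝ) ≠ 0 := by positivity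
      have hkey : ((((n-t).factorial : ℕ)):ℝ)⁻¹ * ((t.factorial:ℝ))⁻¹
          = (((n.factorial : ℕ)):ℝ)⁻¹ * (n.choose t : ℕ) := by
        field_simp
        linear_combination -hcr
      push_cast
      norm_num
      linear_combination ((-1:ℝ)^n*(-1:ℝ)^t*(ν+(j:ℝ)+t)*((j:ℝ)+t)^2) * hkey
    rw [Finset.sum_congr rfl hterm, ← Finset.mul_sum]
    rcases Nat.lt_or_ge n 4 with h4 | h4
    · interval_cases n
      · -- n = 0 : j = i+1
        rw [if_pos (show (i:ℤ)+1 = j from by omega),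
          if_neg (show ¬((i:ℤ) = j) from by omega),
          if_neg (show ¬((i:ℤ)-1 = j) from by omega),
          if_neg (show ¬((i:ℤ)-2 = j) from by omega)]
        have hj' : (j:ℝ) = (i:ℝ)+1 := by exact_mod_cast congrArg (Nat.cast : ℕ → ℝ) (by omega : j = i+1)
        simp only [Finset.sum_range_succ, Finset.sum_range_zero, Nat.factorial, Nat.choose]
        push_cast
        rw [hj']
        ring
      · -- n = 1 : j = i
        rw [if_neg (show ¬((i:ℤ)+1 = j) from by omega),
          if_pos (show (i:ℤ) = j from by omega),
          if_neg (show ¬((i:ℤ)-1 = j) from by omega),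
          if_neg (show ¬((i:ℤ)-2 = j) from by omega)]
        have hj' : (j:ℝ) = (i:ℝ) := by exact_mod_cast congrArg (Nat.cast : ℕ → ℝ) (by omega : j = i)
        simp only [Finset.sum_range_succ, Finset.sum_range_zero, Nat.factorial, Nat.choose]
        push_cast
        rw [hj']
        ring
      · -- n = 2 : j = i-1
        rw [if_neg (show ¬((i:ℤ)+1 = j) from by omega),
          if_neg (show ¬((i:ℤ) = j) from by omega),
          if_pos (show (i:ℤ)-1 = j from by omega),
          if_neg (show ¬((i:ℤ)-2 = j) from by omega)]
        have hj' : (i:ℝ) = (j:ℝ)+1 := by exact_mod_cast congrArg (Nat.cast : ℕ → ℝ) (by omega : i = j+1)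
        simp only [Finset.sum_range_succ, Finset.sum_range_zero, Nat.factorial, Nat.choose]
        push_cast
        rw [hj']
        ring
      · -- n = 3 : j = i-2
        rw [if_neg (show ¬((i:ℤ)+1 = j) from by omega),
          if_neg (show ¬((i:ℤ) = j) from by omega),
          if_neg (show ¬((i:ℤ)-1 = j) from by omega),
          if_pos (show (i:ℤ)-2 = j from by omega)]
        have hj' : (i:ℝ) = (j:ℝ)+2 := by exact_mod_cast congrArg (Nat.cast : ℕ → ℝ) (by omega : i = j+2)
        simp only [Finset.sum_range_succ, Finset.sum_range_zero, Nat.factorial, Nat.choose]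
        push_cast
        rw [hj']
        ring
    · -- n ≥ 4 : everything vanishes
      have hQ : ∑ t ∈ range (n+1),
          (-1:ℝ)^t * (n.choose t : ℕ) * ((ν+(j:ℝ)+t)*((j:ℝ)+t)^2) = 0 := by
        have e : ∀ t ∈ range (n+1), (-1:ℝ)^t * (n.choose t : ℕ) * ((ν+(j:ℝ)+t)*((j:ℝ)+t)^2)
            = (-1:ℝ)^t * (n.choose t : ℕ) *
              (((ν+(j:ℝ))*(j:ℝ)^2) + ((ν+(j:ℝ))*2*(j:ℝ)+(j:ℝ)^2)*t + (ν+3*(j:ℝ))*(t:ℝ)^2 + 1*(t:ℝ)^3) := by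
          intro t _; ring
        rw [Finset.sum_congr rfl e]
        exact Apoly n h4 _ _ _ _
      rw [hQ, mul_zero,
        if_neg (show ¬((i:ℤ)+1 = j) from by omega),
        if_neg (show ¬((i:ℤ) = j) from by omega),
        if_neg (show ¬((i:ℤ)-1 = j) from by omega),
        if_neg (show ¬((i:ℤ)-2 = j) from by omega)]
      ring
end

section
/- Let α > -1 be real, let N ≥ 1, and let k, r be integers with 0 ≤ k, r ≤ N-1. Then the sum S(α;k,r,N) = Σ_{n=0}^{N-1} n! Γ(α+n+1) / ((n-k)!(n-r)!) equals (-1)^r Γ(α+r+1) r! / (N-1-k)! times Σ_{i=0}^r (Γ(N+i+α+1)/Γ(i+α+1)) · (-1)^i / (i! (r-i)! (α+k+i+1)). -/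
/-!
Since `n! / (n - r)!` is the falling factorial `n^(r)`, the sum is
`∑ₙ n^(r) Γ(α + n + 1) / (n - k)!`. For fixed `c > 0` the forward difference in `i` of
`g_a(i) = Γ(c + i) / Γ(a + i)` is `(c - a) g_{a+1}(i)`, so
`Δʳ g_a (0) = (c - a)^(r) Γ(c) / Γ(a + r)`.
Newton's formula for `Δʳ` with `c = α + n + 1`, `a = α + 1` expands `n^(r) Γ(α + n + 1)` as a
combination of `Γ(α + n + i + 1)`, `i ≤ r`, with coefficients independent of `n`. After exchanging
the sums, each inner sum `∑ₙ Γ(b + n) / (n - k)!` telescopes (hockey-stick identity for `Γ`) to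
`Γ(b + N) / ((b + k) (N - 1 - k)!)`.
-/

open Finset

open Polynomial Real fwdDiff

noncomputable def gammaRatio (c a : ℝ) (i : ℕ) : ℝ := Gamma (c + i) / Gamma (a + i)

theorem fwdDiff_gammaRatio {c a : ℝ} (hc : 0 < c) (ha : 0 < a) :
    Δ_[1] (gammaRatio c a) = (c - a) • gammaRatio c (a + 1) := by
  funext i
  have hci : 0 < c + i := by positivity
  have hai : 0 < a + i := by positivity
  simp only [fwdDiff, gammaRatio, Pi.smul_apply, smul_eq_mul, Nat.cast_add_one, ← add_assoc,
    Gamma_add_one hci.ne', Gamma_add_one hai.ne', add_right_comm a 1]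
  have := (Gamma_pos_of_pos hai).ne'
  field_simp
  ring

theorem fwdDiff_iter_gammaRatio {c a : ℝ} (hc : 0 < c) (ha : 0 < a) (r : ℕ) :
    (Δ_[1])^[r] (gammaRatio c a) = (descPochhammer ℝ r).eval (c - a) • gammaRatio c (a + r) := by
  induction r generalizing a with
  | zero => simp
  | succ r ih =>
    rw [Function.iterate_succ_apply, fwdDiff_gammaRatio hc ha, fwdDiff_iter_const_smul,
      ih (by positivity), smul_smul, descPochhammer_succ_left, eval_mul, eval_comp]
    simp only [eval_X, eval_sub, eval_one, Nat.cast_add_one, sub_sub, add_assoc, add_comm (1 : ℝ)]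

theorem sum_neg_one_pow_mul_choose_mul_Gamma_div_Gamma {c a : ℝ} (hc : 0 < c) (ha : 0 < a)
    (r : ℕ) :
    ∑ i ∈ range (r + 1), (-1) ^ (r - i) * r.choose i * (Gamma (c + i) / Gamma (a + i))
      = (descPochhammer ℝ r).eval (c - a) * (Gamma c / Gamma (a + r)) := by
  have := congr_fun (fwdDiff_iter_gammaRatio hc ha r) 0
  rw [fwdDiff_iter_eq_sum_shift] at this
  simpa [gammaRatio, zsmul_eq_mul] using this

theorem sum_range_succ_Gamma_add_div_factorial {b : ℝ} (hb : 0 < b) (M : ℕ) :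
    ∑ m ∈ range (M + 1), Gamma (b + m) / m.factorial
      = Gamma (b + M + 1) / (b * M.factorial) := by
  induction M with
  | zero => simp [Gamma_add_one hb.ne', hb.ne']
  | succ M ih =>
    have hbM : 0 < b + M := by positivity
    rw [sum_range_succ, ih, Nat.cast_add_one, ← add_assoc,
      Gamma_add_one (s := b + M + 1) (by positivity), Gamma_add_one hbM.ne', Nat.factorial_succ]
    push_cast
    field_simp
    ring

theorem invFact_natCast (n : ℕ) : invFact n = (n.factorial : ℝ)⁻¹ := by
  simp [invFact]

theorem invFact_of_neg {n : ℤ} (hn : n < 0) : invFact n = 0 := by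
  simp [invFact, hn.not_ge]

theorem factorial_mul_invFact_sub (n r : ℕ) :
    (n.factorial : ℝ) * invFact ((n : ℤ) - r) = n.descFactorial r := by
  rcases le_or_gt r n with h | h
  · rw [show (n : ℤ) - r = ((n - r : ℕ) : ℤ) by omega, invFact_natCast,
      ← Nat.factorial_mul_descFactorial h]
    push_cast
    field_simp
  · rw [invFact_of_neg (by omega), Nat.descFactorial_of_lt h]
    simp

theorem sum_range_Gamma_add_mul_invFact {c : ℝ} (hc : 0 < c) {N k : ℕ} (hk : k < N) :
    ∑ n ∈ range N, Gamma (c + n) * invFact ((n : ℤ) - k)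
      = Gamma (c + N) / ((c + k) * (N - 1 - k).factorial) := by
  obtain ⟨M, rfl⟩ : ∃ M, N = k + (M + 1) := ⟨N - 1 - k, by omega⟩
  have hck : 0 < c + k := by positivity
  have hlow : ∑ n ∈ range k, Gamma (c + n) * invFact ((n : ℤ) - k) = 0 :=
    sum_eq_zero fun n hn => by rw [invFact_of_neg (by simp at hn; omega), mul_zero]
  rw [sum_range_add, hlow, zero_add, show k + (M + 1) - 1 - k = M by omega]
  convert sum_range_succ_Gamma_add_div_factorial hck M using 2 with m
  · push_cast
    rw [show ((k : ℤ) + m - k) = m by ring, invFact_natCast, add_assoc, div_eq_mul_inv]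
  · push_cast
    ring_nf

theorem sum_descFactorial_mul_Gamma_add_mul_invFact {a : ℝ} (ha : 0 < a) {N k : ℕ} (hk : k < N)
    (r : ℕ) :
    ∑ n ∈ range N, n.descFactorial r * Gamma (a + n) * invFact ((n : ℤ) - k)
      = Gamma (a + r) / (N - 1 - k).factorial * ∑ i ∈ range (r + 1),
          (-1) ^ (r - i) * r.choose i * Gamma (a + i + N) / (Gamma (a + i) * (a + i + k)) := by
  have hΓ (x : ℝ) (hx : 0 < x) : Gamma x ≠ 0 := (Gamma_pos_of_pos hx).ne'
  have hexpand (n : ℕ) : n.descFactorial r * Gamma (a + n) = ∑ i ∈ range (r + 1),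
      Gamma (a + r) * ((-1) ^ (r - i) * r.choose i / Gamma (a + i)) * Gamma (a + i + n) := by
    have h := sum_neg_one_pow_mul_choose_mul_Gamma_div_Gamma (c := a + n) (by positivity) ha r
    rw [add_sub_cancel_left, descPochhammer_eval_eq_descFactorial] at h
    calc n.descFactorial r * Gamma (a + n)
        = Gamma (a + r) * (n.descFactorial r * (Gamma (a + n) / Gamma (a + r))) := by
          field_simp [hΓ (a + r) (by positivity)]
      _ = _ := by
          rw [← h, mul_sum]
          refine sum_congr rfl fun i _ => ?_
          rw [add_right_comm]
          ring
  calc ∑ n ∈ range N, n.descFactorial r * Gamma (a + n) * invFact ((n : ℤ) - k)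
      = ∑ i ∈ range (r + 1), Gamma (a + r) * ((-1) ^ (r - i) * r.choose i / Gamma (a + i)) *
          ∑ n ∈ range N, Gamma (a + i + n) * invFact ((n : ℤ) - k) := by
        simp_rw [hexpand, sum_mul, mul_sum, mul_assoc]
        exact sum_comm
    _ = _ := by
        rw [mul_sum]
        refine sum_congr rfl fun i _ => ?_
        rw [sum_range_Gamma_add_mul_invFact (by positivity) hk]
        have := hΓ (a + i) (by positivity)
        field_simp

theorem S_closed_form_general (α : ℝ) (hα : -1 < α) (N : ℕ) (hN : 1 ≤ N)
    (k r : ℕ) (hk : k ≤ N - 1) :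
    ∑ n ∈ Finset.range N,
      (n.factorial : ℝ) * Real.Gamma (α + n + 1) *
        invFact ((n : ℤ) - k) * invFact ((n : ℤ) - r)
      = (-1 : ℝ) ^ r * Real.Gamma (α + r + 1) * (r.factorial : ℝ) /
          ((N - 1 - k).factorial : ℝ) *
        ∑ i ∈ Finset.range (r + 1),
          (Real.Gamma ((N : ℝ) + i + α + 1) / Real.Gamma ((i : ℝ) + α + 1)) *
            (-1 : ℝ) ^ i /
              ((i.factorial : ℝ) * ((r - i).factorial : ℝ) * (α + k + i + 1)) := by
  have hkN : k < N := by omega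
  have hα₁ : 0 < α + 1 := by linarith
  calc _ = ∑ n ∈ range N, n.descFactorial r * Gamma (α + 1 + n) * invFact ((n : ℤ) - k) :=
        sum_congr rfl fun n _ => by
          rw [← factorial_mul_invFact_sub, add_right_comm]
          ring
    _ = _ := by
        rw [sum_descFactorial_mul_Gamma_add_mul_invFact hα₁ hkN, mul_sum, mul_sum]
        refine sum_congr rfl fun i hi => ?_
        have hir : i ≤ r := Nat.lt_succ_iff.mp (mem_range.mp hi)
        have hsign : (-1 : ℝ) ^ (r - i) = (-1) ^ r * (-1) ^ i := by
          rw [← pow_sub_mul_pow (-1 : ℝ) hir, mul_assoc, ← pow_add, ← two_mul, pow_mul]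
          simp
        have hΓi : Gamma (α + 1 + i) ≠ 0 := (Gamma_pos_of_pos (by positivity)).ne'
        have hpole : α + 1 + i + k ≠ 0 := by positivity
        rw [hsign, Nat.cast_choose ℝ hir, show (N : ℝ) + i + α + 1 = α + 1 + i + N by ring,
          show (i : ℝ) + α + 1 = α + 1 + i by ring, show α + k + i + 1 = α + 1 + i + k by ring,
          add_right_comm α]
        field_simp

theorem S_closed_form (α : ℝ) (hα : -1 < α) (N : ℕ) (hN : 1 ≤ N)
    (k r : ℕ) (hk : k ≤ N - 1) (hr : r ≤ N - 1) :
    ∑ n ∈ Finset.range N,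
      (n.factorial : ℝ) * Real.Gamma (α + n + 1) *
        invFact ((n : ℤ) - k) * invFact ((n : ℤ) - r)
      = (-1 : ℝ) ^ r * Real.Gamma (α + r + 1) * (r.factorial : ℝ) /
          ((N - 1 - k).factorial : ℝ) *
        ∑ i ∈ Finset.range (r + 1),
          (Real.Gamma ((N : ℝ) + i + α + 1) / Real.Gamma ((i : ℝ) + α + 1)) *
            (-1 : ℝ) ^ i /
              ((i.factorial : ℝ) * ((r - i).factorial : ℝ) * (α + k + i + 1)) :=
  S_closed_form_general α hα N hN k r hk
end

section
/- For M ≥ N positive integers and 0 ≤ k, l ≤ N-1, the identity Σ_{p=0}^{N-1} ((M-N+p)!/p!) (-p)_k (-p)_l = ((M-N+l)! l! / (N-1-k)!) Σ_{i=0}^{l} ((i+M)!/(M-N+i)!) · (-1)^{i+k} / (i! (l-i)! (M-N+k+i+1)) holds. -/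
/-!
Write `N = k + m + 1` and `M = N + a`. Since `(-p)_k = (-1)^k p (p-1) ⋯ (p-k+1)`, the factor `(-p)_k`
kills the terms with `p < k`. The key step expands `(-p)_l = (w - y)_l`, with `w = a + 1` and
`y = p + a + 1`, by the Chu–Vandermonde-type identity
`(w - y)_n = ∑_{i+j=n} (-1)^i C(n,i) (y)_i (w+i)_j`.
As `(a+p)! (p+a+1)_i = (a+p+i)!`, after exchanging the two sums each inner sum over `p` is the
hockey-stick sum `∑_{q ≤ m} (b+q)!/q! = (b+m+1)! / (m! (b+1))` with `b = a + k + i`, which is where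
the denominator `M - N + k + i + 1` comes from.
-/

open Finset

/-- Pochhammer symbol `(x)_k = x (x+1) ⋯ (x+k-1)`. -/
noncomputable def poch (x : ℝ) (k : ℕ) : ℝ := ∏ i ∈ Finset.range k, (x + i)

open Polynomial Nat

theorem ascPochhammer_eval_sub {R : Type*} [CommRing R] (w y : R) (n : ℕ) :
    (ascPochhammer R n).eval (w - y) = ∑ ij ∈ antidiagonal n, (n.choose ij.1 : R) *
      ((-1) ^ ij.1 * (ascPochhammer R ij.1).eval y * (ascPochhammer R ij.2).eval (w + ij.1)) := by
  have eval_succ_left : ∀ (j : ℕ) (x : R),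
      (ascPochhammer R (j + 1)).eval x = x * (ascPochhammer R j).eval (x + 1) := by
    intro j x
    simp [ascPochhammer_succ_left, eval_comp]
  induction n generalizing w with
  | zero => simp
  | succ n ih =>
    rw [sum_antidiagonal_choose_succ_mul (fun i j =>
        (-1) ^ i * (ascPochhammer R i).eval y * (ascPochhammer R j).eval (w + i)),
      eval_succ_left, sub_add_eq_add_sub, ih, mul_sum, ← sum_add_distrib]
    -- Pascal's rule matches the splitting `w - y = (w + i) - (y + i)` of the `i`-th term.
    refine sum_congr rfl fun ij hij => ?_
    rw [Nat.choose_symm_of_eq_add (mem_antidiagonal.1 hij).symm, eval_succ_left,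
      ascPochhammer_succ_eval]
    push_cast
    rw [add_right_comm w 1, ← add_assoc]
    ring

section FactorialSums

variable {K : Type*} [Field K] [CharZero K]

theorem sum_range_add_mul_descFactorial_div_factorial (f : ℕ → K) (k n : ℕ) :
    ∑ p ∈ range (k + n), f p * p.descFactorial k / p ! = ∑ q ∈ range n, f (k + q) / q ! := by
  rw [sum_range_add]
  have below : ∀ p ∈ range k, f p * p.descFactorial k / p ! = 0 := fun p hp => by
    rw [descFactorial_of_lt (mem_range.1 hp)]
    simp
  rw [sum_eq_zero below, zero_add]
  refine sum_congr rfl fun q _ => ?_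
  have h := factorial_mul_descFactorial (Nat.le_add_right k q)
  rw [Nat.add_sub_cancel_left] at h
  rw [← h]
  push_cast
  have : ((k + q).descFactorial k : K) ≠ 0 := by
    exact_mod_cast (Nat.descFactorial_pos.2 (Nat.le_add_right k q)).ne'
  field_simp

theorem sum_range_factorial_add_div_factorial (b m : ℕ) :
    ∑ q ∈ range (m + 1), ((b + q) ! : K) / q ! = (b + m + 1) ! / (m ! * (b + 1)) := by
  induction m with
  | zero =>
    rw [sum_range_one, add_zero, factorial_succ]
    push_cast
    field_simp
  | succ m ih =>
    rw [sum_range_succ, ih, ← add_assoc, factorial_succ (b + m + 1), factorial_succ m]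
    push_cast
    field_simp
    ring

theorem sum_range_factorial_mul_ascFactorial_mul_descFactorial_div_factorial (a i k m : ℕ) :
    ∑ p ∈ range (k + m + 1), ((a + p) ! * (a + p + 1).ascFactorial i * p.descFactorial k : K) / p !
      = (a + k + i + m + 1) ! / (m ! * (a + k + i + 1)) := by
  simp_rw [← Nat.cast_mul, factorial_mul_ascFactorial, Nat.cast_mul]
  rw [add_assoc k, sum_range_add_mul_descFactorial_div_factorial (fun p => ((a + p + i) ! : K))]
  convert sum_range_factorial_add_div_factorial (K := K) (a + k + i) m using 3 with q
  · ring_nf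
  · push_cast; ring

end FactorialSums

theorem poch_eq_ascPochhammer_eval (x : ℝ) (k : ℕ) : poch x k = (ascPochhammer ℝ k).eval x := by
  induction k with
  | zero => simp [poch]
  | succ k ih => rw [poch, prod_range_succ, ← poch, ih, ascPochhammer_succ_eval]

theorem poch_neg_natCast (p k : ℕ) : poch (-(p : ℝ)) k = (-1) ^ k * p.descFactorial k := by
  rw [poch_eq_ascPochhammer_eval, ascPochhammer_eval_neg_eq_descPochhammer,
    descPochhammer_eval_eq_descFactorial]

theorem poch_neg_natCast_eq_sum (a p l : ℕ) :
    poch (-(p : ℝ)) l = ∑ i ∈ range (l + 1),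
      (-1 : ℝ) ^ i * l.choose i * (a + p + 1).ascFactorial i * (a + i + 1).ascFactorial (l - i) := by
  rw [poch_eq_ascPochhammer_eval, show -(p : ℝ) = (a + 1 : ℝ) - (a + p + 1) by ring,
    ascPochhammer_eval_sub, Nat.sum_antidiagonal_eq_sum_range_succ (fun i j => (l.choose i : ℝ) *
      ((-1) ^ i * (ascPochhammer ℝ i).eval (a + p + 1 : ℝ) *
        (ascPochhammer ℝ j).eval ((a + 1 : ℝ) + i)))]
  refine sum_congr rfl fun i _ => ?_
  simp only [Nat.cast_ascFactorial]
  push_cast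
  ring_nf

theorem factorial_div_mul_poch_neg_mul_poch_neg_eq_sum (a p k l : ℕ) :
    ((a + p) ! / p ! : ℝ) * poch (-(p : ℝ)) k * poch (-(p : ℝ)) l =
      ∑ i ∈ range (l + 1), (-1) ^ (i + k) * l.choose i * (a + i + 1).ascFactorial (l - i) *
        (((a + p) ! * (a + p + 1).ascFactorial i * p.descFactorial k : ℝ) / p !) := by
  rw [poch_neg_natCast, poch_neg_natCast_eq_sum a, mul_sum]
  refine sum_congr rfl fun i _ => ?_
  ring

theorem crucial_summation_formula_general (M N : ℕ) (hN : 1 ≤ N) (hMN : N ≤ M)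
    (k l : ℕ) (hk : k ≤ N - 1) :
    ∑ p ∈ Finset.range N,
      (((M - N + p).factorial : ℝ) / (p.factorial : ℝ)) *
        poch (-(p : ℝ)) k * poch (-(p : ℝ)) l
      = (((M - N + l).factorial : ℝ) * (l.factorial : ℝ) / ((N - 1 - k).factorial : ℝ)) *
        ∑ i ∈ Finset.range (l + 1),
          (((i + M).factorial : ℝ) / ((M - N + i).factorial : ℝ)) *
            (-1 : ℝ) ^ (i + k) /
              ((i.factorial : ℝ) * ((l - i).factorial : ℝ) * ((M : ℝ) - N + k + i + 1)) := by
  obtain ⟨a, rfl⟩ : ∃ a, M = N + a := ⟨M - N, by omega⟩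
  obtain ⟨m, rfl⟩ : ∃ m, N = k + m + 1 := ⟨N - k - 1, by omega⟩
  rw [show k + m + 1 + a - (k + m + 1) = a by omega, show k + m + 1 - 1 - k = m by omega]
  simp_rw [factorial_div_mul_poch_neg_mul_poch_neg_eq_sum]
  rw [sum_comm, mul_sum]
  refine sum_congr rfl fun i hi => ?_
  rw [← mul_sum, sum_range_factorial_mul_ascFactorial_mul_descFactorial_div_factorial]
  obtain ⟨j, rfl⟩ : ∃ j, l = i + j := ⟨l - i, by have := mem_range.1 hi; omega⟩
  have hasc := factorial_mul_ascFactorial (a + i) j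
  rw [Nat.cast_choose ℝ (Nat.le_add_right i j), Nat.add_sub_cancel_left, ← add_assoc,
    show i + (k + m + 1 + a) = a + k + i + m + 1 by ring, ← hasc]
  push_cast
  rw [show (k + m + 1 + a - (k + m + 1) + k + i + 1 : ℝ) = a + k + i + 1 by ring]
  have : (a + k + i + 1 : ℝ) ≠ 0 := by positivity
  field_simp

theorem crucial_summation_formula (M N : ℕ) (hN : 1 ≤ N) (hMN : N ≤ M)
    (k l : ℕ) (hk : k ≤ N - 1) (hl : l ≤ N - 1) :
    ∑ p ∈ Finset.range N,
      (((M - N + p).factorial : ℝ) / (p.factorial : ℝ)) *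
        poch (-(p : ℝ)) k * poch (-(p : ℝ)) l
      = (((M - N + l).factorial : ℝ) * (l.factorial : ℝ) / ((N - 1 - k).factorial : ℝ)) *
        ∑ i ∈ Finset.range (l + 1),
          (((i + M).factorial : ℝ) / ((M - N + i).factorial : ℝ)) *
            (-1 : ℝ) ^ (i + k) /
              ((i.factorial : ℝ) * ((l - i).factorial : ℝ) * ((M : ℝ) - N + k + i + 1)) :=
  crucial_summation_formula_general M N hN hMN k l hk
end

section
/- Let N ≥ 1, let k be an integer with 0 ≤ k ≤ N-1, and let s, t be complex numbers such that all Gamma function values appearing are finite. Then Σ_{n=0}^{N-1} (Γ(t-n)/Γ(s-n)) · ((-n)_k / (s-n)_k) = k! (Γ(t-N+1)/Γ(s-t+k)) Σ_{m=0}^{k} (-1)^m binom(N,m) Γ(s-t+m-1)/Γ(s+m-N) − Γ(t+1) Γ(s-t-1) k! / (Γ(s) Γ(s-t+k)). -/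
open Finset Complex

/-- Pochhammer symbol `(x)_k = x (x+1) ⋯ (x+k-1)` for complex `x`. -/
noncomputable def pochC (x : ℂ) (k : ℕ) : ℂ := ∏ i ∈ Finset.range k, (x + i)


noncomputable def Pd (x : ℂ) (n : ℕ) : ℂ := ∏ j ∈ Finset.range n, (x - (j + 1))

lemma pochC_zero (x : ℂ) : pochC x 0 = 1 := by simp [pochC]

lemma pochC_succ (x : ℂ) (k : ℕ) : pochC x (k + 1) = pochC x k * (x + k) := by
  simp [pochC, Finset.prod_range_succ]

lemma Pd_zero (x : ℂ) : Pd x 0 = 1 := by simp [Pd]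

lemma Pd_succ (x : ℂ) (n : ℕ) : Pd x (n + 1) = Pd x n * (x - (n + 1)) := by
  simp [Pd, Finset.prod_range_succ]

lemma pochC_ne_zero {x : ℂ} (hx : ∀ i : ℕ, x + i ≠ 0) (k : ℕ) : pochC x k ≠ 0 :=
  Finset.prod_ne_zero_iff.2 fun i _ => hx i

lemma Pd_ne_zero {x : ℂ} (hx : ∀ m : ℤ, x ≠ m) (n : ℕ) : Pd x n ≠ 0 :=
  Finset.prod_ne_zero_iff.2 fun j _ => sub_ne_zero.2 (by exact_mod_cast hx (j + 1))

lemma Gamma_sub_nat {x : ℂ} (hx : ∀ m : ℤ, x ≠ m) (n : ℕ) :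
    Complex.Gamma (x - n) * Pd x n = Complex.Gamma x := by
  induction n with
  | zero => simp [Pd_zero]
  | succ n ih =>
    have h0 : x - ((n + 1 : ℕ) : ℂ) ≠ 0 := sub_ne_zero.2 (by exact_mod_cast hx (n + 1))
    have key : Complex.Gamma (x - ((n + 1 : ℕ) : ℂ)) * (x - ((n + 1 : ℕ) : ℂ))
        = Complex.Gamma (x - n) := by
      have := Complex.Gamma_add_one _ h0
      rw [show x - ((n + 1 : ℕ) : ℂ) + 1 = x - n by push_cast; ring] at this
      rw [this]; ring
    calc Complex.Gamma (x - ((n+1:ℕ) : ℂ)) * Pd x (n + 1)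
        = Complex.Gamma (x - ((n+1:ℕ) : ℂ)) * (x - ((n+1:ℕ):ℂ)) * Pd x n := by
          rw [Pd_succ]; push_cast; ring
      _ = Complex.Gamma (x - n) * Pd x n := by rw [key]
      _ = Complex.Gamma x := ih

lemma Gamma_add_nat {x : ℂ} (hx : ∀ m : ℤ, x ≠ m) (n : ℕ) :
    Complex.Gamma (x + n) = Complex.Gamma x * pochC x n := by
  induction n with
  | zero => simp [pochC_zero]
  | succ n ih =>
    have h0 : x + (n : ℂ) ≠ 0 := by
      intro h; exact hx (-n) (by rw [← sub_eq_zero]; push_cast; linear_combination h)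
    rw [show x + ((n + 1 : ℕ) : ℂ) = x + n + 1 by push_cast; ring,
      Complex.Gamma_add_one _ h0, ih, pochC_succ]; ring

lemma pochC_neg_nat {n k : ℕ} (h : k ≤ n) :
    pochC (-(n : ℂ)) k = (-1 : ℂ) ^ k * (n.descFactorial k : ℂ) := by
  induction k with
  | zero => simp [pochC_zero]
  | succ k ih =>
    have hk : k ≤ n := Nat.le_of_succ_le h
    rw [pochC_succ, ih hk, Nat.descFactorial_succ]
    have : -(n : ℂ) + k = -((n - k : ℕ) : ℂ) := by
      push_cast [Nat.cast_sub hk]; ring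
    rw [this]; push_cast; ring

lemma pochC_neg_nat_zero {n k : ℕ} (h : n < k) : pochC (-(n : ℂ)) k = 0 :=
  Finset.prod_eq_zero (Finset.mem_range.2 h) (by simp)
lemma step_sum (s t : ℂ) (k N : ℕ) (hkN : k ≤ N) :
    (∑ m ∈ Finset.range (k+1),
        (-1:ℂ)^m * ((N+1).choose m : ℂ) * pochC (s-t-1) m * Pd s (N+1-m))
      - (t - N) * ∑ m ∈ Finset.range (k+1),
        (-1:ℂ)^m * (N.choose m : ℂ) * pochC (s-t-1) m * Pd s (N-m)
    = (-1:ℂ)^k * (N.choose k : ℂ) * pochC (s-t-1) (k+1) * Pd s (N-k) := by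
  set x := s - t - 1 with hx
  have A : (∑ m ∈ Finset.range (k+1),
        (-1:ℂ)^m * ((N+1).choose m : ℂ) * pochC x m * Pd s (N+1-m))
      = (∑ m ∈ Finset.range (k+1),
          (-1:ℂ)^m * (N.choose m : ℂ) * pochC x m * Pd s (N+1-m))
        - ∑ i ∈ Finset.range k,
          (-1:ℂ)^i * (N.choose i : ℂ) * pochC x (i+1) * Pd s (N-i) := by
    rw [Finset.sum_range_succ'
        (fun m => (-1:ℂ)^m * ((N+1).choose m : ℂ) * pochC x m * Pd s (N+1-m)) k,
      Finset.sum_range_succ'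
        (fun m => (-1:ℂ)^m * ((N).choose m : ℂ) * pochC x m * Pd s (N+1-m)) k]
    have hterm : ∀ i ∈ Finset.range k,
        (-1:ℂ)^(i+1) * ((N+1).choose (i+1) : ℂ) * pochC x (i+1) * Pd s (N+1-(i+1))
        = ((-1:ℂ)^(i+1) * ((N).choose (i+1) : ℂ) * pochC x (i+1) * Pd s (N+1-(i+1)))
          - (-1:ℂ)^i * (N.choose i : ℂ) * pochC x (i+1) * Pd s (N-i) := by
      intro i _
      rw [Nat.choose_succ_succ, Nat.succ_sub_succ]
      push_cast; ring
    rw [Finset.sum_congr rfl hterm, Finset.sum_sub_distrib]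
    simp only [Nat.choose_zero_right, Nat.succ_sub_succ]
    ring
  rw [A]
  have B : (∑ m ∈ Finset.range (k+1),
        (-1:ℂ)^m * (N.choose m : ℂ) * pochC x m * Pd s (N+1-m))
      - (t - N) * ∑ m ∈ Finset.range (k+1),
        (-1:ℂ)^m * (N.choose m : ℂ) * pochC x m * Pd s (N-m)
      = ∑ m ∈ Finset.range (k+1),
        (-1:ℂ)^m * (N.choose m : ℂ) * (pochC x m * (x + m)) * Pd s (N-m) := by
    rw [Finset.mul_sum, ← Finset.sum_sub_distrib]
    refine Finset.sum_congr rfl fun m hm => ?_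
    have hm' : m ≤ N := le_trans (Nat.lt_succ_iff.1 (Finset.mem_range.1 hm)) hkN
    rw [show N + 1 - m = (N - m) + 1 from by omega, Pd_succ,
      Nat.cast_sub hm', hx]
    ring
  have C : (∑ i ∈ Finset.range k,
        (-1:ℂ)^i * (N.choose i : ℂ) * pochC x (i+1) * Pd s (N-i))
      = ∑ i ∈ Finset.range k,
        (-1:ℂ)^i * (N.choose i : ℂ) * (pochC x i * (x + i)) * Pd s (N-i) := by
    refine Finset.sum_congr rfl fun i _ => ?_
    rw [pochC_succ]
  have E := Finset.sum_range_succ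
    (fun m => (-1:ℂ)^m * (N.choose m : ℂ) * (pochC x m * (x + m)) * Pd s (N-m)) k
  rw [pochC_succ]
  linear_combination B - C + E

lemma keyA (s t : ℂ) : ∀ K : ℕ,
    ∑ m ∈ Finset.range (K+1),
      (-1:ℂ)^m * (K.choose m : ℂ) * pochC (s-t-1) m * Pd s (K-m)
    = ∏ j ∈ Finset.range K, (t - j) := by
  intro K
  induction K with
  | zero => simp [pochC_zero, Pd_zero]
  | succ K ih =>
    have h := step_sum s t K K le_rfl
    rw [Finset.sum_range_succ, Finset.prod_range_succ]
    simp only [Nat.choose_self, Nat.cast_one, Nat.sub_self, Pd_zero, mul_one] at h ⊢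
    linear_combination h + (t - (K:ℂ)) * ih

lemma alg_main (k : ℕ) (s t : ℂ) (ht : ∀ m : ℤ, t ≠ (m : ℂ))
    (hQ : ∀ m : ℕ, pochC (s - t - 1) m ≠ 0) :
    ∀ N, k + 1 ≤ N →
    ∑ n ∈ Finset.range N, pochC (-(n : ℂ)) k * Pd s (n - k) / Pd t n
    = (k.factorial : ℂ) / (Pd t (N - 1) * pochC (s - t - 1) (k + 1)) *
        (∑ m ∈ Finset.range (k + 1),
          (-1:ℂ)^m * (N.choose m : ℂ) * pochC (s - t - 1) m * Pd s (N - m))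
      - t * (k.factorial : ℂ) / pochC (s - t - 1) (k + 1) := by
  have hPt : ∀ n, Pd t n ≠ 0 := Pd_ne_zero ht
  refine Nat.le_induction ?_ ?_
  · -- base case N = k + 1
    have hA := keyA s t (k + 1)
    rw [Finset.sum_range_succ, Finset.prod_range_succ'] at hA
    simp only [Nat.choose_self, Nat.cast_one, Nat.sub_self, Pd_zero, mul_one,
      Nat.cast_zero, sub_zero] at hA
    have hprod : ∏ j ∈ Finset.range k, (t - ((j + 1 : ℕ) : ℂ)) = Pd t k :=
      Finset.prod_congr rfl fun j _ => by push_cast; ring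
    rw [hprod] at hA
    rw [Finset.sum_range_succ]
    rw [Finset.sum_eq_zero (fun n hn => by
      rw [pochC_neg_nat_zero (Finset.mem_range.1 hn)]; simp)]
    rw [pochC_neg_nat le_rfl, Nat.descFactorial_self]
    simp only [Nat.add_sub_cancel, Nat.sub_self, Pd_zero, zero_add]
    have hinvQ : pochC (s-t-1) (k+1) * (pochC (s-t-1) (k+1))⁻¹ = 1 :=
      mul_inv_cancel₀ (hQ (k+1))
    have hinvP : Pd t k * (Pd t k)⁻¹ = 1 := mul_inv_cancel₀ (hPt k)
    linear_combination (-(k.factorial:ℂ) * (Pd t k)⁻¹ * (pochC (s-t-1) (k+1))⁻¹) * hA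
      + ((-1:ℂ)^(k+1) * (k.factorial:ℂ) * (Pd t k)⁻¹) * hinvQ
      + (-(t * (k.factorial:ℂ) * (pochC (s-t-1) (k+1))⁻¹)) * hinvP
  · -- inductive step
    intro N hN ih
    have hkN : k ≤ N := le_trans (Nat.le_succ k) hN
    have hstep := step_sum s t k N hkN
    have hfac : (N.descFactorial k : ℂ) = (k.factorial : ℂ) * (N.choose k : ℂ) := by
      exact_mod_cast congrArg (Nat.cast : ℕ → ℂ) (Nat.descFactorial_eq_factorial_mul_choose N k)
    have hP2 : Pd t N = Pd t (N - 1) * (t - N) := by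
      have h1 : N - 1 + 1 = N := by omega
      have := Pd_succ t (N - 1)
      rw [h1] at this
      rw [this]
      congr 2
      push_cast [Nat.cast_sub (by omega : 1 ≤ N)]
      ring
    have htN : (t - (N:ℂ)) ≠ 0 := sub_ne_zero.2 (ht N)
    rw [Finset.sum_range_succ, ih, pochC_neg_nat hkN, hfac,
      show N + 1 - 1 = N from rfl]
    have hinvQ : pochC (s-t-1) (k+1) * (pochC (s-t-1) (k+1))⁻¹ = 1 :=
      mul_inv_cancel₀ (hQ (k+1))
    have hinvP : Pd t (N-1) * (Pd t (N-1))⁻¹ = 1 := mul_inv_cancel₀ (hPt (N-1))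
    have hinvN : Pd t N * (Pd t N)⁻¹ = 1 := mul_inv_cancel₀ (hPt N)
    linear_combination
      (-(k.factorial:ℂ) * (Pd t N)⁻¹ * (pochC (s-t-1) (k+1))⁻¹) * hstep
      - ((-1:ℂ)^k * (k.factorial:ℂ) * (N.choose k : ℂ) * Pd s (N-k) * (Pd t N)⁻¹) * hinvQ
      - ((k.factorial:ℂ) * (pochC (s-t-1) (k+1))⁻¹ * (Pd t (N-1))⁻¹ *
          (∑ m ∈ Finset.range (k+1), (-1:ℂ)^m * (N.choose m : ℂ) * pochC (s-t-1) m * Pd s (N-m))) * hinvN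
      + ((k.factorial:ℂ) * (pochC (s-t-1) (k+1))⁻¹ * (Pd t (N-1))⁻¹ * (Pd t N)⁻¹ *
          (∑ m ∈ Finset.range (k+1), (-1:ℂ)^m * (N.choose m : ℂ) * pochC (s-t-1) m * Pd s (N-m))) * hP2
      + ((k.factorial:ℂ) * (pochC (s-t-1) (k+1))⁻¹ * (Pd t N)⁻¹ * (t - (N:ℂ)) *
          (∑ m ∈ Finset.range (k+1), (-1:ℂ)^m * (N.choose m : ℂ) * pochC (s-t-1) m * Pd s (N-m))) * hinvP

lemma gamma_ne_zero_of_irr {x : ℂ} (hx : ∀ m : ℤ, x ≠ (m : ℂ)) : Complex.Gamma x ≠ 0 :=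
  Complex.Gamma_ne_zero fun m h => hx (-m) (by push_cast [h]; ring)

lemma shift_irr {x : ℂ} (hx : ∀ m : ℤ, x ≠ (m : ℂ)) (a : ℤ) :
    ∀ m : ℤ, x + a ≠ (m : ℂ) := fun m h => hx (m - a) (by push_cast; linear_combination h)

lemma lhs_term (s t : ℂ) (hs : ∀ m : ℤ, s ≠ (m : ℂ)) (ht : ∀ m : ℤ, t ≠ (m : ℂ))
    (k n : ℕ) :
    (Complex.Gamma (t - n) / Complex.Gamma (s - n)) *
      (pochC (-(n : ℂ)) k / pochC (s - n) k)
    = Complex.Gamma t / Complex.Gamma s *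
        (pochC (-(n : ℂ)) k * Pd s (n - k) / Pd t n) := by
  rcases lt_or_ge n k with h | h
  · rw [pochC_neg_nat_zero h]; simp
  · have hsn : ∀ m : ℤ, s - (n : ℂ) ≠ (m : ℂ) := fun m hm =>
      hs (m + n) (by push_cast; linear_combination hm)
    have e1 : Complex.Gamma (t - n) * Pd t n = Complex.Gamma t := Gamma_sub_nat ht n
    have e2 : Complex.Gamma (s - n) * pochC (s - n) k
        = Complex.Gamma (s - ((n - k : ℕ) : ℂ)) := by
      rw [← Gamma_add_nat hsn k]
      congr 1
      rw [Nat.cast_sub h]; ring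
    have e3 : Complex.Gamma (s - ((n - k : ℕ) : ℂ)) * Pd s (n - k) = Complex.Gamma s :=
      Gamma_sub_nat hs (n - k)
    have e4 : Complex.Gamma (s - n) * pochC (s - n) k * Pd s (n - k) = Complex.Gamma s := by
      rw [e2]; exact e3
    have hD1 : Complex.Gamma (s - n) * pochC (s - n) k ≠ 0 :=
      mul_ne_zero (gamma_ne_zero_of_irr hsn)
        (pochC_ne_zero (fun i hi => hsn (-(i:ℤ)) (by push_cast; linear_combination hi)) k)
    have hD2 : Complex.Gamma s * Pd t n ≠ 0 :=
      mul_ne_zero (gamma_ne_zero_of_irr hs) (Pd_ne_zero ht n)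
    rw [div_mul_div_comm, div_mul_div_comm, div_eq_div_iff hD1 hD2]
    linear_combination (pochC (-(n:ℂ)) k * Complex.Gamma s) * e1
      - (Complex.Gamma t * pochC (-(n:ℂ)) k) * e4


theorem combinatorial_lemma (N : ℕ) (hN : 1 ≤ N) (k : ℕ) (hk : k ≤ N - 1)
    (s t : ℂ)
    (hs : ∀ m : ℤ, s ≠ (m : ℂ)) (ht : ∀ m : ℤ, t ≠ (m : ℂ))
    (hst : ∀ m : ℤ, s - t ≠ (m : ℂ)) :
    ∑ n ∈ Finset.range N,
        (Complex.Gamma (t - n) / Complex.Gamma (s - n)) *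
          (pochC (-(n : ℂ)) k / pochC (s - n) k)
      = (k.factorial : ℂ) * (Complex.Gamma (t - N + 1) / Complex.Gamma (s - t + k)) *
          ∑ m ∈ Finset.range (k + 1),
            (-1 : ℂ) ^ m * (N.choose m : ℂ) *
              (Complex.Gamma (s - t + m - 1) / Complex.Gamma (s + m - N))
        - Complex.Gamma (t + 1) * Complex.Gamma (s - t - 1) * (k.factorial : ℂ) /
            (Complex.Gamma s * Complex.Gamma (s - t + k)) := by
  have hx2 : ∀ m : ℤ, s - t - 1 ≠ (m : ℂ) := fun m h =>
    hst (m + 1) (by push_cast; linear_combination h)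
  have hQ : ∀ m : ℕ, pochC (s - t - 1) m ≠ 0 := fun m =>
    pochC_ne_zero (fun i hi => hx2 (-(i : ℤ)) (by push_cast; linear_combination hi)) m
  have hΓs : Complex.Gamma s ≠ 0 := gamma_ne_zero_of_irr hs
  have hΓG : Complex.Gamma (s - t - 1) ≠ 0 := gamma_ne_zero_of_irr hx2
  have hPt : ∀ n, Pd t n ≠ 0 := Pd_ne_zero ht
  have halg := alg_main k s t ht hQ N (by omega)
  have hL : ∑ n ∈ Finset.range N,
        (Complex.Gamma (t - n) / Complex.Gamma (s - n)) *
          (pochC (-(n : ℂ)) k / pochC (s - n) k)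
      = Complex.Gamma t / Complex.Gamma s *
          ∑ n ∈ Finset.range N, pochC (-(n : ℂ)) k * Pd s (n - k) / Pd t n := by
    rw [Finset.mul_sum]
    exact Finset.sum_congr rfl fun n _ => lhs_term s t hs ht k n
  rw [hL, halg]
  -- conversions for the RHS
  have g1 : Complex.Gamma (t - N + 1) = Complex.Gamma t / Pd t (N - 1) := by
    have h := Gamma_sub_nat ht (N - 1)
    rw [eq_div_iff (hPt (N - 1)), ← h]
    congr 2
    rw [Nat.cast_sub hN]; push_cast; ring
  have g2 : Complex.Gamma (s - t + k)
      = Complex.Gamma (s - t - 1) * pochC (s - t - 1) (k + 1) := by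
    rw [← Gamma_add_nat hx2 (k + 1)]
    congr 1; push_cast; ring
  have g5 : Complex.Gamma (t + 1) = t * Complex.Gamma t := by
    rw [Complex.Gamma_add_one t (fun h => ht 0 (by simpa using h))]
  have hsum : ∑ m ∈ Finset.range (k + 1),
        (-1 : ℂ) ^ m * (N.choose m : ℂ) *
          (Complex.Gamma (s - t + m - 1) / Complex.Gamma (s + m - N))
      = Complex.Gamma (s - t - 1) / Complex.Gamma s *
          ∑ m ∈ Finset.range (k + 1),
            (-1 : ℂ) ^ m * (N.choose m : ℂ) * pochC (s - t - 1) m * Pd s (N - m) := by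
    rw [Finset.mul_sum]
    refine Finset.sum_congr rfl fun m hm => ?_
    have hmN : m ≤ N := by
      have := Finset.mem_range.1 hm; omega
    have g3 : Complex.Gamma (s - t + m - 1)
        = Complex.Gamma (s - t - 1) * pochC (s - t - 1) m := by
      rw [← Gamma_add_nat hx2 m]; congr 1; ring
    have g4 : Complex.Gamma (s + m - N) = Complex.Gamma s / Pd s (N - m) := by
      have h := Gamma_sub_nat hs (N - m)
      rw [eq_div_iff (Pd_ne_zero hs (N - m)), ← h]
      congr 2
      rw [Nat.cast_sub hmN]; ring
    rw [g3, g4, div_div_eq_mul_div]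
    ring
  rw [g1, g2, g5, hsum]
  have hc : Complex.Gamma (s - t - 1) * (Complex.Gamma (s - t - 1))⁻¹ = 1 :=
    mul_inv_cancel₀ hΓG
  linear_combination (-((k.factorial : ℂ) * Complex.Gamma t *
      (∑ m ∈ Finset.range (k + 1),
        (-1 : ℂ) ^ m * (N.choose m : ℂ) * pochC (s - t - 1) m * Pd s (N - m)) /
      (Pd t (N - 1) * pochC (s - t - 1) (k + 1) * Complex.Gamma s)
    - t * Complex.Gamma t * (k.factorial : ℂ) /
      (Complex.Gamma s * pochC (s - t - 1) (k + 1)))) * hc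
end
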